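/- arXiv:2002.12445 — 2 statements merged into one kernel-verified Lean document; each statement's English description precedes it below -/
import Mathlib

section
/- Let V be a finite set of propositional variables and let s ⊆ V be a state. For a literal l define s ⊨ l iff (l = v and v ∈ s) or (l = ¬v and v ∉ s). Let E and E' be two consistent sets of literals and let apply be the STRIPS update apply(s, E) = (s \ {v : ¬v ∈ E}) ∪ {v : v ∈ E}. Then apply(s, E) = apply(s, E') if and only if every literal in the symmetric difference E Δ E' holds in s (i.e., s ⊨ l for all l ∈ E Δ E'). -/
inductive Lit (V : Type) where
  | pos (v : V) : Lit V
  | neg (v : V) : Lit V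

def holds {V : Type} (s : Set V) : Lit V → Prop
  | .pos v => v ∈ s
  | .neg v => v ∉ s

def Consistent {V : Type} (E : Set (Lit V)) : Prop :=
  ∀ v : V, ¬(Lit.pos v ∈ E ∧ Lit.neg v ∈ E)

def applyEff {V : Type} (s : Set V) (E : Set (Lit V)) : Set V :=
  (s \ {v | Lit.neg v ∈ E}) ∪ {v | Lit.pos v ∈ E}

structure Domain (V O : Type) where
  Pre : O → Set (Lit V)
  Eff : O → Set (Set (Lit V))

def sat {V : Type} (s : Set V) (P : Set (Lit V)) : Prop := ∀ l ∈ P, holds s l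

def step {V O : Type} (D : Domain V O) (o : O) (s s' : Set V) : Prop :=
  sat s (D.Pre o) ∧ ∃ E ∈ D.Eff o, applyEff s E = s'

inductive Exec {V O : Type} (D : Domain V O) : Set V → List (O × Set V) → Prop
  | nil (s : Set V) : Exec D s []
  | cons {s s' : Set V} {o : O} {rest : List (O × Set V)} :
      step D o s s' → Exec D s' rest → Exec D s ((o, s') :: rest)

def OneofRef {V O : Type} (D1 D2 : Domain V O) : Prop :=
  (∀ o, D2.Pre o = D1.Pre o) ∧ (∀ o, D2.Eff o ⊆ D1.Eff o)

theorem stmt1 {V : Type} [Fintype V] (s : Set V) (E E' : Set (Lit V))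
    (hE : Consistent E) (hE' : Consistent E') :
    applyEff s E = applyEff s E' ↔ ∀ l ∈ symmDiff E E', holds s l := by
  constructor
  · intro h l hl
    have hmem : (l ∈ E ∧ l ∉ E') ∨ (l ∈ E' ∧ l ∉ E) := by
      simpa [symmDiff, Set.sup_eq_union, Set.mem_union, Set.mem_diff] using hl
    have key : ∀ v, v ∈ applyEff s E ↔ (v ∈ s ∧ Lit.neg v ∉ E) ∨ Lit.pos v ∈ E := by
      intro v; simp [applyEff]
    have key' : ∀ v, v ∈ applyEff s E' ↔ (v ∈ s ∧ Lit.neg v ∉ E') ∨ Lit.pos v ∈ E' := by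
      intro v; simp [applyEff]
    have hiff : ∀ v, ((v ∈ s ∧ Lit.neg v ∉ E) ∨ Lit.pos v ∈ E) ↔
        ((v ∈ s ∧ Lit.neg v ∉ E') ∨ Lit.pos v ∈ E') := by
      intro v; rw [← key, ← key', h]
    cases l with
    | pos v =>
      have := (hiff v)
      have hEv := hE v; have hE'v := hE' v
      show v ∈ s
      by_contra hv
      rcases hmem with ⟨h1, h2⟩ | ⟨h1, h2⟩
      · have := this.mp (Or.inr h1); tauto
      · have := this.mpr (Or.inr h1); tauto
    | neg v =>
      have := (hiff v)
      have hEv := hE v; have hE'v := hE' v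
      show v ∉ s
      intro hv
      rcases hmem with ⟨h1, h2⟩ | ⟨h1, h2⟩
      · have := this.mpr (Or.inl ⟨hv, h2⟩); tauto
      · have := this.mp (Or.inl ⟨hv, h2⟩); tauto
  · intro h
    ext v
    have hp := h (Lit.pos v)
    have hn := h (Lit.neg v)
    have hEv := hE v; have hE'v := hE' v
    simp only [symmDiff, Set.sup_eq_union, Set.mem_union, Set.mem_diff, holds] at hp hn
    simp only [applyEff, Set.mem_union, Set.mem_diff, Set.mem_setOf_eq]
    tauto
end

section
/- Let E be a consistent set of literals and let D be a domain with operator o having effect set Eff_o^D. Define Explains[o, D, E] to hold at state s iff there exists E' ∈ Eff_o^D such that every literal in E Δ E' holds in s. Then for any states s, s' with s' = apply(s, E): s' is a possible o-successor of s in D (i.e., some E'' ∈ Eff_o^D satisfies apply(s, E'') = s') if and only if Explains[o, D, E] holds at s. -/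
lemma mem_applyEff' {V : Type} (s : Set V) (A : Set (Lit V)) (v : V) :
    v ∈ applyEff s A ↔ (v ∈ s ∧ Lit.neg v ∉ A) ∨ Lit.pos v ∈ A := by
  simp [applyEff, Set.mem_union, Set.mem_diff, Set.mem_setOf_eq]

lemma applyEff_eq_iff {V : Type} (s : Set V) (A B : Set (Lit V))
    (hA : Consistent A) (hB : Consistent B) :
    applyEff s A = applyEff s B ↔ ∀ l ∈ symmDiff A B, holds s l := by
  constructor
  · intro h l hl
    rw [Set.mem_symmDiff] at hl
    cases l with
    | pos v =>
      have hv := Set.ext_iff.mp h v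
      rw [mem_applyEff', mem_applyEff'] at hv
      have hA' := hA v; have hB' := hB v
      simp only [holds]
      tauto
    | neg v =>
      have hv := Set.ext_iff.mp h v
      rw [mem_applyEff', mem_applyEff'] at hv
      have hA' := hA v; have hB' := hB v
      simp only [holds]
      tauto
  · intro h
    ext v
    rw [mem_applyEff', mem_applyEff']
    have hp := fun h' => h (Lit.pos v) (Set.mem_symmDiff.mpr h')
    have hn := fun h' => h (Lit.neg v) (Set.mem_symmDiff.mpr h')
    simp only [holds] at hp hn
    have hA' := hA v; have hB' := hB v
    tauto

theorem stmt8 {V O : Type} [Fintype V] (D : Domain V O) (o : O)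
    (hcons : ∀ E' ∈ D.Eff o, Consistent E')
    (E : Set (Lit V)) (hE : Consistent E) (s s' : Set V) (hs' : s' = applyEff s E) :
    (∃ E'' ∈ D.Eff o, applyEff s E'' = s') ↔
      ∃ E' ∈ D.Eff o, ∀ l ∈ symmDiff E E', holds s l := by
  subst hs'
  constructor
  · rintro ⟨E'', hmem, heq⟩
    exact ⟨E'', hmem, (applyEff_eq_iff s E E'' hE (hcons _ hmem)).mp heq.symm⟩
  · rintro ⟨E', hmem, hh⟩
    exact ⟨E', hmem, ((applyEff_eq_iff s E E' hE (hcons _ hmem)).mpr hh).symm⟩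
end
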